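/- arXiv:1509.07008 — 2 statements merged into one kernel-verified Lean document; each statement's English description precedes it below -/
import Mathlib

section
/- Assume |a_j| = 1 for all j = 1,…,n. Then the Laurent polynomial W_{κ,a} satisfies W_{κ,a}† = (−1)^{n(n−1)/2}·W_{κ,a}, where for a Laurent polynomial P(z) = Σ_m c_m z^m one sets P†(z) = Σ_m conj(c_m)·z^{−m}. -/
/-- The derivation `D = z·d/dz` on Laurent polynomials: `D(z^m) = m·z^m`. -/
noncomputable def Dop (P : LaurentPolynomial ℂ) : LaurentPolynomial ℂ :=
  Finsupp.sum P.coeff fun m c => LaurentPolynomial.C ((m : ℂ) * c) * LaurentPolynomial.T m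

/-- `Φ_k(a;z) = a·z^k + a⁻¹·z^{−k}`. -/
noncomputable def PhiL (k : ℕ) (a : ℂ) : LaurentPolynomial ℂ :=
  LaurentPolynomial.C a * LaurentPolynomial.T (k : ℤ) +
    LaurentPolynomial.C a⁻¹ * LaurentPolynomial.T (-(k : ℤ))

/-- `W_{κ,a}`: the determinant of the `n×n` matrix with `(i,j)` entry `D^{i−1}Φ_{k_j}(a_j;z)`. -/
noncomputable def Wka (n : ℕ) (k : Fin n → ℕ) (a : Fin n → ℂ) : LaurentPolynomial ℂ :=
  Matrix.det (Matrix.of fun i j : Fin n => Dop^[(i : ℕ)] (PhiL (k j) (a j)))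

/-- The exceptional Laurent orthogonal polynomial `P_{κ,a;l}`: the determinant of the
`(n+1)×(n+1)` matrix with `(i,j)` entry `D^{i−1}Φ_{k_j}(a_j;z)` for `j ≤ n` and
`D^{i−1}z^l` in the last column. -/
noncomputable def Pka (n : ℕ) (k : Fin n → ℕ) (a : Fin n → ℂ) (l : ℤ) : LaurentPolynomial ℂ :=
  Matrix.det (Matrix.of fun i j : Fin (n + 1) =>
    Fin.lastCases (Dop^[(i : ℕ)] (LaurentPolynomial.T l))
      (fun j' => Dop^[(i : ℕ)] (PhiL (k j') (a j'))) j)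

/-- Evaluation of a Laurent polynomial at `z ∈ ℂ`. -/
noncomputable def evalL (P : LaurentPolynomial ℂ) (z : ℂ) : ℂ :=
  Finsupp.sum P.coeff fun m c => c * z ^ m

/-- The dagger operation: `(Σ c_m z^m)† = Σ conj(c_m)·z^{−m}`. -/
noncomputable def dag (P : LaurentPolynomial ℂ) : LaurentPolynomial ℂ :=
  Finsupp.sum P.coeff fun m c => LaurentPolynomial.C ((starRingEnd ℂ) c) * LaurentPolynomial.T (-m)

/-- The set `Z_κ` of zeros of `W_{κ,a}` in `ℂ\{0}`. -/
def Zka (n : ℕ) (k : Fin n → ℕ) (a : Fin n → ℂ) : Set ℂ :=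
  {z | z ≠ 0 ∧ evalL (Wka n k a) z = 0}

/-- The multiplicity of `z₀ ≠ 0` as a zero of the Laurent polynomial `W`, computed as the
root multiplicity of `z₀` in a polynomial representative `f'` with `toLaurent f' = W · T^d`. -/
noncomputable def multL (W : LaurentPolynomial ℂ) (z₀ : ℂ) : ℕ :=
  Polynomial.rootMultiplicity z₀ (W.exists_T_pow).choose_spec.choose

/-- `ψ` is quasi-invariant at `x₀` with multiplicity `m`: `(x−x₀)^m·ψ(x)` extends
analytically across `x₀` and all its odd-order derivatives of orders `1,3,…,2m−1`
vanish at `x₀`. -/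
def QuasiInv (ψ : ℂ → ℂ) (x₀ : ℂ) (m : ℕ) : Prop :=
  ∃ F : ℂ → ℂ, AnalyticAt ℂ F x₀ ∧
    (∀ᶠ x in nhdsWithin x₀ {x₀}ᶜ, F x = (x - x₀) ^ m * ψ x) ∧
    ∀ j : ℕ, 1 ≤ j → j ≤ m → iteratedDeriv (2 * j - 1) F x₀ = 0

/-- `Q_κ`: Laurent polynomials `P` such that `Φ(x) = P(e^{ix})/W_{κ,a}(e^{ix})` is
quasi-invariant at every point `x_j ∈ ℂ` with `e^{ix_j} ∈ Z_κ`, with the multiplicity of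
the corresponding zero. -/
def Qka (n : ℕ) (k : Fin n → ℕ) (a : Fin n → ℂ) : Set (LaurentPolynomial ℂ) :=
  {P | ∀ x₀ : ℂ, Complex.exp (Complex.I * x₀) ∈ Zka n k a →
    QuasiInv (fun x => evalL P (Complex.exp (Complex.I * x)) /
        evalL (Wka n k a) (Complex.exp (Complex.I * x))) x₀
      (multL (Wka n k a) (Complex.exp (Complex.I * x₀)))}

/-- `Q_{κ,C}`: as `Q_κ`, but quasi-invariance is required only at real points `x_j ∈ ℝ`. -/
def QkaC (n : ℕ) (k : Fin n → ℕ) (a : Fin n → ℂ) : Set (LaurentPolynomial ℂ) :=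
  {P | ∀ x₀ : ℝ, Complex.exp (Complex.I * (x₀ : ℂ)) ∈ Zka n k a →
    QuasiInv (fun x => evalL P (Complex.exp (Complex.I * x)) /
        evalL (Wka n k a) (Complex.exp (Complex.I * x))) (x₀ : ℂ)
      (multL (Wka n k a) (Complex.exp (Complex.I * (x₀ : ℂ))))}

/-- `μ > 0` is admissible for the bilinear form if `μ ≠ |z_i|` for every zero `z_i ∈ Z_κ`. -/
def AdmMu (n : ℕ) (k : Fin n → ℕ) (a : Fin n → ℂ) (μ : ℝ) : Prop :=
  0 < μ ∧ ∀ z ∈ Zka n k a, μ ≠ ‖z‖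

/-- The complex bilinear form `(P,Q) = (1/2πi)·∮_{|z|=μ} P(z)·Q(z)·W_{κ,a}(z)^{−2}·dz/z`. -/
noncomputable def formB (n : ℕ) (k : Fin n → ℕ) (a : Fin n → ℂ) (μ : ℝ)
    (P Q : LaurentPolynomial ℂ) : ℂ :=
  (2 * Real.pi * Complex.I)⁻¹ *
    ∮ z in C(0, μ), evalL P z * evalL Q z / ((evalL (Wka n k a) z) ^ 2 * z)

/-- `μ > 0` is admissible for the Hermitian form if `1 < max(μ, 1/μ) < ν`, where
`ν = min{|z_i| : z_i ∈ Z_κ, |z_i| > 1}` (`ν = +∞` if no such zero exists). -/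
def AdmMuH (n : ℕ) (k : Fin n → ℕ) (a : Fin n → ℂ) (μ : ℝ) : Prop :=
  0 < μ ∧ 1 < max μ μ⁻¹ ∧
    ∀ z ∈ Zka n k a, 1 < ‖z‖ → max μ μ⁻¹ < ‖z‖

/-- The sesquilinear product
`⟨P,Q⟩_L = (1/2πi)·∮_{|z|=μ} P(z)·Q†(z)·(W_{κ,a}(z)·W_{κ,a}†(z))⁻¹·dz/z`. -/
noncomputable def formH (n : ℕ) (k : Fin n → ℕ) (a : Fin n → ℂ) (μ : ℝ)
    (P Q : LaurentPolynomial ℂ) : ℂ :=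
  (2 * Real.pi * Complex.I)⁻¹ *
    ∮ z in C(0, μ), evalL P z * evalL (dag Q) z /
      (evalL (Wka n k a) z * evalL (dag (Wka n k a)) z * z)

/-!
`†` is a ring endomorphism of `ℂ[z, z⁻¹]` (conjugate the coefficients, then `z ↦ z⁻¹`)
and it anticommutes with `D = z d/dz`, so `(D^i P)† = (-1)^i D^i (P†)`. For `|a| = 1` we
have `conj a = a⁻¹`, hence `Φ_k(a)† = Φ_k(a)`. Applying `†` entrywise to the matrix defining
`W_{κ,a}` therefore multiplies row `i` by `(-1)^i`, and the determinant by
`(-1)^(0 + 1 + ⋯ + (n-1))`.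
-/

open LaurentPolynomial

lemma dag_single (m : ℤ) (c : ℂ) :
    dag (AddMonoidAlgebra.single m c) = AddMonoidAlgebra.single (-m) (starRingEnd ℂ c) := by
  rw [dag, AddMonoidAlgebra.coeff_single, Finsupp.sum_single_index (by simp), single_eq_C_mul_T]

lemma dag_add (P Q : LaurentPolynomial ℂ) : dag (P + Q) = dag P + dag Q := by
  rw [dag, dag, dag, AddMonoidAlgebra.coeff_add]
  exact Finsupp.sum_add_index' (by simp) fun _ _ _ => by simp [add_mul]

lemma dag_mul (P Q : LaurentPolynomial ℂ) : dag (P * Q) = dag P * dag Q := by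
  induction P using LaurentPolynomial.induction_on' with
  | add p q hp hq => rw [add_mul, dag_add, dag_add, hp, hq, add_mul]
  | C_mul_T m c =>
    induction Q using LaurentPolynomial.induction_on' with
    | add p q hp hq => rw [mul_add, dag_add, dag_add, hp, hq, mul_add]
    | C_mul_T l b =>
      simp only [← single_eq_C_mul_T, AddMonoidAlgebra.single_mul_single, dag_single, neg_add,
        map_mul]

noncomputable def dagRingHom : LaurentPolynomial ℂ →+* LaurentPolynomial ℂ where
  toFun := dag
  map_one' := by simpa using dag_single 0 1
  map_mul' := dag_mul
  map_zero' := by simp [dag]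
  map_add' := dag_add

lemma Dop_single (m : ℤ) (c : ℂ) :
    Dop (AddMonoidAlgebra.single m c) = AddMonoidAlgebra.single m (m * c) := by
  rw [Dop, AddMonoidAlgebra.coeff_single, Finsupp.sum_single_index (by simp), single_eq_C_mul_T]

lemma Dop_add (P Q : LaurentPolynomial ℂ) : Dop (P + Q) = Dop P + Dop Q := by
  rw [Dop, Dop, Dop, AddMonoidAlgebra.coeff_add]
  exact Finsupp.sum_add_index' (by simp) fun _ _ _ => by simp [mul_add, add_mul]

noncomputable def DopAddHom : LaurentPolynomial ℂ →+ LaurentPolynomial ℂ :=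
  AddMonoidHom.mk' Dop Dop_add

lemma dag_Dop (P : LaurentPolynomial ℂ) : dag (Dop P) = -Dop (dag P) := by
  induction P using LaurentPolynomial.induction_on' with
  | add p q hp hq => rw [Dop_add, dag_add, hp, hq, dag_add, Dop_add, neg_add]
  | C_mul_T m c =>
    rw [← single_eq_C_mul_T, Dop_single, dag_single, dag_single, Dop_single,
      ← AddMonoidAlgebra.single_neg, map_mul, map_intCast]
    push_cast
    ring_nf

lemma dag_Dop_iterate (i : ℕ) (P : LaurentPolynomial ℂ) :
    dag (Dop^[i] P) = (-1) ^ i * Dop^[i] (dag P) := by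
  induction i generalizing P with
  | zero => simp
  | succ i ih =>
    have hneg : Dop^[i] (-Dop (dag P)) = -Dop^[i] (Dop (dag P)) := iterate_map_neg DopAddHom i _
    rw [Function.iterate_succ_apply, ih, dag_Dop, Function.iterate_succ_apply, hneg, pow_succ]
    ring

lemma dag_PhiL {a : ℂ} (ha : ‖a‖ = 1) (k : ℕ) : dag (PhiL k a) = PhiL k a := by
  have hconj : starRingEnd ℂ a = a⁻¹ := (Complex.inv_eq_conj ha).symm
  rw [PhiL, ← single_eq_C_mul_T, ← single_eq_C_mul_T, dag_add, dag_single, dag_single, hconj,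
    map_inv₀, hconj, inv_inv, neg_neg, add_comm]

lemma Matrix.det_neg_one_pow_mul_row {R : Type*} [CommRing R] {n : ℕ}
    (M : Matrix (Fin n) (Fin n) R) :
    (of fun i j : Fin n => (-1) ^ (i : ℕ) * M i j).det = (-1) ^ (n * (n - 1) / 2) * M.det := by
  rw [det_mul_column, Finset.prod_pow_eq_pow_sum, Fin.sum_univ_eq_sum_range (fun i => i) n,
    Finset.sum_range_id]

theorem stmt_11_general (n : ℕ) (k : Fin n → ℕ)
    (a : Fin n → ℂ) (ha : ∀ j, ‖a j‖ = 1) :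
    dag (Wka n k a) = LaurentPolynomial.C ((-1 : ℂ) ^ (n * (n - 1) / 2)) * Wka n k a := by
  let M : Matrix (Fin n) (Fin n) (LaurentPolynomial ℂ) :=
    Matrix.of fun i j => Dop^[(i : ℕ)] (PhiL (k j) (a j))
  have hrows : M.map dagRingHom = Matrix.of fun i j : Fin n => (-1) ^ (i : ℕ) * M i j :=
    Matrix.ext fun i j => (dag_Dop_iterate i _).trans (by rw [dag_PhiL (ha j)]; rfl)
  calc dag (Wka n k a) = (M.map dagRingHom).det := RingHom.map_det dagRingHom M
    _ = _ := by rw [hrows, Matrix.det_neg_one_pow_mul_row, map_pow, map_neg, map_one]; rfl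

/-- if `|a_j| = 1` for all `j`, then `W_{κ,a}† = (−1)^{n(n−1)/2}·W_{κ,a}`. -/
theorem stmt_11 (n : ℕ) (k : Fin n → ℕ) (hk : StrictAnti k) (hkpos : ∀ j, 0 < k j)
    (a : Fin n → ℂ) (ha : ∀ j, ‖a j‖ = 1) :
    dag (Wka n k a) = LaurentPolynomial.C ((-1 : ℂ) ^ (n * (n - 1) / 2)) * Wka n k a :=
  stmt_11_general n k a ha
end

section
/- The complex bilinear form (·,·) is non-degenerate on Q_κ: if P ∈ Q_κ satisfies (P,Q) = 0 for all Q ∈ Q_κ, then P = 0. (Combined with the facts that the codimension of U_κ in Q_κ is n and the radical of the form restricted to U_κ has dimension n, this says that Q_κ is the minimal complex Euclidean extension of U_κ.) -/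
/-!
Every multiple `W² · R` of the square of the Wronskian lies in `Q_κ`: the quotient
`W² R / W = W R`, read through `z = e^{ix}`, is entire in `x` and vanishes to order at least `m`
at a point `x_j` over a zero of multiplicity `m`, so `(x - x_j)^m` times it vanishes to order
`2m` and all its derivatives of order `< 2m` vanish there. Against such elements the weight
`W⁻²` of the form cancels and `(P, W² R)` is the constant coefficient of `P R` (a residue).
Pairing with `W² z^{-l}` therefore extracts the coefficient of `z^l` in `P`, so a `P`
orthogonal to `Q_κ` has no nonzero coefficient.
-/

open LaurentPolynomial

section evalL

variable {z : ℂ}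

lemma evalL_eq_eval₂ (P : LaurentPolynomial ℂ) (hz : z ≠ 0) :
    evalL P z = eval₂ (RingHom.id ℂ) (Units.mk0 z hz) P := by
  induction P using LaurentPolynomial.induction_on' with
  | add p q hp hq =>
    rw [map_add, ← hp, ← hq, evalL, evalL, evalL]
    exact Finsupp.sum_add_index' (fun _ => zero_mul _) fun _ _ _ => add_mul _ _ _
  | C_mul_T n s =>
    rw [eval₂_C_mul_T, ← single_eq_C_mul_T, evalL, AddMonoidAlgebra.coeff_single,
      Finsupp.sum_single_index (zero_mul _)]
    simp

lemma evalL_mul (P Q : LaurentPolynomial ℂ) (hz : z ≠ 0) :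
    evalL (P * Q) z = evalL P z * evalL Q z := by
  simp only [evalL_eq_eval₂ _ hz, map_mul]

lemma evalL_pow (P : LaurentPolynomial ℂ) (m : ℕ) (hz : z ≠ 0) :
    evalL (P ^ m) z = evalL P z ^ m := by
  simp only [evalL_eq_eval₂ _ hz, map_pow]

lemma evalL_toLaurent (f : Polynomial ℂ) (hz : z ≠ 0) :
    evalL (Polynomial.toLaurent f) z = f.eval z := by
  rw [evalL_eq_eval₂ _ hz, eval₂_toLaurent]
  rfl

lemma evalL_T (m : ℤ) (hz : z ≠ 0) : evalL (T m) z = z ^ m := by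
  rw [evalL_eq_eval₂ _ hz, eval₂_T]
  simp

lemma evalL_eq_sum (P : LaurentPolynomial ℂ) (z : ℂ) :
    evalL P z = ∑ m ∈ P.coeff.support, P.coeff m * z ^ m := rfl

lemma analyticAt_evalL (P : LaurentPolynomial ℂ) (hz : z ≠ 0) : AnalyticAt ℂ (evalL P) z := by
  show AnalyticAt ℂ (fun w => ∑ m ∈ P.coeff.support, P.coeff m * w ^ m) z
  exact Finset.analyticAt_fun_sum _ fun m _ => analyticAt_const.mul (analyticAt_id.zpow hz)

end evalL

lemma natCast_multL_le_analyticOrderAt (W : LaurentPolynomial ℂ) {z₀ : ℂ} (hz₀ : z₀ ≠ 0) :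
    (multL W z₀ : ℕ∞) ≤ analyticOrderAt (evalL W) z₀ := by
  set d := W.exists_T_pow.choose
  set f := W.exists_T_pow.choose_spec.choose
  have hf : Polynomial.toLaurent f = W * T d := W.exists_T_pow.choose_spec.choose_spec
  obtain ⟨q, hq⟩ := Polynomial.pow_rootMultiplicity_dvd f z₀
  rw [natCast_le_analyticOrderAt (analyticAt_evalL W hz₀)]
  refine ⟨fun z => q.eval z * z ^ (-(d : ℤ)),
    (AnalyticOnNhd.eval_polynomial q z₀ trivial).mul (analyticAt_id.zpow hz₀), ?_⟩
  filter_upwards [isOpen_ne.mem_nhds hz₀] with z hz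
  have hfz : evalL W z * z ^ (d : ℤ) = (z - z₀) ^ multL W z₀ * q.eval z := by
    rw [← evalL_T _ hz, ← evalL_mul _ _ hz, ← hf, evalL_toLaurent _ hz, hq, Polynomial.eval_mul,
      Polynomial.eval_pow, Polynomial.eval_sub, Polynomial.eval_X, Polynomial.eval_C]
    rfl
  rw [smul_eq_mul, zpow_neg, ← mul_assoc, ← hfz, mul_inv_cancel_right₀ (zpow_ne_zero _ hz)]

lemma quasiInv_of_natCast_le_analyticOrderAt {ψ : ℂ → ℂ} {x₀ : ℂ} {m : ℕ}
    (hψ : AnalyticAt ℂ ψ x₀) (hm : (m : ℕ∞) ≤ analyticOrderAt ψ x₀) : QuasiInv ψ x₀ m := by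
  have hmon : AnalyticAt ℂ ((· - x₀) ^ m) x₀ := by fun_prop
  have hF := hmon.mul hψ
  refine ⟨_, hF, Filter.Eventually.of_forall fun _ => rfl, fun j hj hjm => ?_⟩
  have hord : ((2 * m : ℕ) : ℕ∞) ≤ analyticOrderAt ((· - x₀) ^ m * ψ) x₀ := by
    rw [analyticOrderAt_mul hmon hψ, analyticOrderAt_centeredMonomial, two_mul, Nat.cast_add]
    gcongr
  exact (natCast_le_analyticOrderAt_iff_iteratedDeriv_eq_zero hF).mp hord _ (by omega)

lemma sq_mul_mem_Qka (n : ℕ) (k : Fin n → ℕ) (a : Fin n → ℂ) (R : LaurentPolynomial ℂ) :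
    Wka n k a ^ 2 * R ∈ Qka n k a := by
  intro x₀ _
  set W := Wka n k a
  set e : ℂ → ℂ := fun x => Complex.exp (Complex.I * x)
  have he : ∀ x, e x ≠ 0 := fun x => Complex.exp_ne_zero _
  have heA : AnalyticAt ℂ e x₀ := by fun_prop
  have hψ : (fun x => evalL (W ^ 2 * R) (e x) / evalL W (e x)) = evalL W ∘ e * evalL R ∘ e := by
    funext x
    rw [evalL_mul _ _ (he x), evalL_pow _ _ (he x)]
    -- where `W` vanishes, both sides are `0` (the quotient through `x / 0 = 0`)
    by_cases h : evalL W (e x) = 0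
    · simp [h]
    · simp only [Pi.mul_apply, Function.comp_apply]
      field_simp
  rw [hψ]
  have hWA := analyticAt_evalL W (he x₀)
  have hW : AnalyticAt ℂ (evalL W ∘ e) x₀ := hWA.comp heA
  have hR : AnalyticAt ℂ (evalL R ∘ e) x₀ := (analyticAt_evalL R (he x₀)).comp heA
  have he_sub : 1 ≤ analyticOrderAt (e · - e x₀) x₀ :=
    Order.one_le_iff_ne_zero.2 (analyticOrderAt_ne_zero.2 ⟨by fun_prop, sub_self _⟩)
  refine quasiInv_of_natCast_le_analyticOrderAt (hW.mul hR) ?_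
  rw [analyticOrderAt_mul hW hR, hWA.analyticOrderAt_comp heA]
  calc (multL W (e x₀) : ℕ∞) ≤ analyticOrderAt (evalL W) (e x₀) :=
        natCast_multL_le_analyticOrderAt W (he x₀)
    _ ≤ analyticOrderAt (evalL W) (e x₀) * analyticOrderAt (e · - e x₀) x₀ :=
        le_mul_of_one_le_right' he_sub
    _ ≤ _ := le_self_add

lemma circleIntegral_zpow_div_self {μ : ℝ} (hμ : 0 < μ) (m : ℤ) :
    (∮ z in C(0, μ), z ^ m / z) = if m = 0 then 2 * Real.pi * Complex.I else 0 := by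
  have hsub : (∮ z in C(0, μ), z ^ m / z) = ∮ z in C(0, μ), (z - 0) ^ (m - 1) := by
    refine circleIntegral.integral_congr hμ.le fun z hz => ?_
    have hz0 : z ≠ 0 := Metric.ne_of_mem_sphere hz hμ.ne'
    rw [sub_zero, zpow_sub_one₀ hz0, div_eq_mul_inv]
  rw [hsub]
  split_ifs with hm
  · simpa [hm] using
      circleIntegral.integral_sub_inv_of_mem_ball (Metric.mem_ball_self (x := (0 : ℂ)) hμ)
  · exact circleIntegral.integral_sub_zpow_of_ne (by omega) 0 0 μ

lemma circleIntegral_evalL_div_self (P : LaurentPolynomial ℂ) {μ : ℝ} (hμ : 0 < μ) :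
    (∮ z in C(0, μ), evalL P z / z) = 2 * Real.pi * Complex.I * P.coeff 0 := by
  have hne : ∀ z ∈ Metric.sphere (0 : ℂ) μ, z ≠ 0 := fun z hz => Metric.ne_of_mem_sphere hz hμ.ne'
  have hint : ∀ m ∈ P.coeff.support, CircleIntegrable (fun z => P.coeff m * (z ^ m / z)) 0 μ :=
    fun m _ => ContinuousOn.circleIntegrable hμ.le <| continuousOn_const.mul <|
      (continuousOn_id.zpow₀ m fun z hz => .inl (hne z hz)).div continuousOn_id hne
  simp_rw [evalL_eq_sum, Finset.sum_div, mul_div_assoc]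
  rw [circleIntegral.integral_fun_sum hint]
  simp_rw [circleIntegral.integral_const_mul, circleIntegral_zpow_div_self hμ]
  simp [mul_comm]

lemma evalL_Wka_ne_zero_of_mem_sphere {n : ℕ} {k : Fin n → ℕ} {a : Fin n → ℂ} {μ : ℝ}
    (hμ : AdmMu n k a μ) {z : ℂ} (hz : z ∈ Metric.sphere (0 : ℂ) μ) :
    evalL (Wka n k a) z ≠ 0 := fun hW =>
  hμ.2 z ⟨Metric.ne_of_mem_sphere hz hμ.1.ne', hW⟩ (by simpa using hz.symm)

lemma formB_sq_mul {n : ℕ} {k : Fin n → ℕ} {a : Fin n → ℂ} {μ : ℝ} (hμ : AdmMu n k a μ)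
    (P R : LaurentPolynomial ℂ) : formB n k a μ P (Wka n k a ^ 2 * R) = (P * R).coeff 0 := by
  have hcongr : (∮ z in C(0, μ), evalL P z * evalL (Wka n k a ^ 2 * R) z /
      (evalL (Wka n k a) z ^ 2 * z)) = ∮ z in C(0, μ), evalL (P * R) z / z := by
    refine circleIntegral.integral_congr hμ.1.le fun z hz => ?_
    have hz0 : z ≠ 0 := Metric.ne_of_mem_sphere hz hμ.1.ne'
    have hW := evalL_Wka_ne_zero_of_mem_sphere hμ hz
    rw [evalL_mul _ _ hz0, evalL_mul _ _ hz0, evalL_pow _ _ hz0]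
    field_simp
  have h2πi : (2 * Real.pi * Complex.I : ℂ) ≠ 0 := by simp [Real.pi_ne_zero]
  rw [formB, hcongr, circleIntegral_evalL_div_self _ hμ.1, inv_mul_cancel_left₀ h2πi]

lemma LaurentPolynomial.coeff_mul_T {R : Type*} [Semiring R] (P : R[T;T⁻¹]) (n m : ℤ) :
    (P * T n).coeff m = P.coeff (m - n) := by
  rw [T, AddMonoidAlgebra.coeff_mul_single_apply, mul_one, sub_eq_add_neg]

theorem stmt_16_general (n : ℕ) (k : Fin n → ℕ) (a : Fin n → ℂ)
    (P : LaurentPolynomial ℂ) (μ : ℝ) (hμ : AdmMu n k a μ)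
    (horth : ∀ Q ∈ Qka n k a, formB n k a μ P Q = 0) :
    P = 0 := by
  ext m
  have h := horth _ (sq_mul_mem_Qka n k a (T (-m)))
  rwa [formB_sq_mul hμ, coeff_mul_T, zero_sub, neg_neg] at h

/-- the bilinear form `(·,·)` is non-degenerate on `Q_κ`: if `P ∈ Q_κ` is
orthogonal to every `Q ∈ Q_κ`, then `P = 0`. -/
theorem stmt_16 (n : ℕ) (k : Fin n → ℕ) (hk : StrictAnti k) (hkpos : ∀ j, 0 < k j)
    (a : Fin n → ℂ) (ha : ∀ j, a j ≠ 0)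
    (P : LaurentPolynomial ℂ) (hP : P ∈ Qka n k a) (μ : ℝ) (hμ : AdmMu n k a μ)
    (horth : ∀ Q ∈ Qka n k a, formB n k a μ P Q = 0) :
    P = 0 :=
  stmt_16_general n k a P μ hμ horth
end
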